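/- If E is not a parent of Y, then S_AS is invariant, i.e., E and Y are d-separated given the union of all minimally invariant sets. -/

import Mathlib

/-- Nodes of the graph: the environment node `E`, predictor nodes `V j` for
`j ∈ {1, …, d}` (represented by `Fin d`), and the response node `Y`. -/
inductive Node (d : ℕ) : Type where
  | E : Node d
  | V : Fin d → Node d
  | Y : Node d
deriving DecidableEq

/-- A directed acyclic graph on `{E} ∪ {1, …, d} ∪ {Y}` in which `E` has no
parents (`E` is exogenous). -/
structure CGraph (d : ℕ) where
  adj : Node d → Node d → Prop
  acyclic : ∀ v, ¬ Relation.TransGen adj v v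
  exogenous : ∀ v, ¬ adj v Node.E

namespace CGraph

variable {d : ℕ} (G : CGraph d)

/-- Undirected adjacency: an edge between `u` and `v` in either direction. -/
def Edge (u v : Node d) : Prop := G.adj u v ∨ G.adj v u

/-- `p` is a path between `a` and `b`: a duplicate-free list of nodes starting
at `a`, ending at `b`, with consecutive nodes adjacent (in either direction). -/
def IsPath (p : List (Node d)) (a b : Node d) : Prop :=
  p.head? = some a ∧ p.getLast? = some b ∧ p.Nodup ∧ p.Chain' G.Edge

/-- `x` is a (strict) descendant of `v`. -/
def Desc (v x : Node d) : Prop := Relation.TransGen G.adj v x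

/-- The consecutive triple `u, m, w` on a path blocks the path given `C`:
either `m` is a non-collider lying in `C`, or `m` is a collider such that
neither `m` nor any of its descendants lies in `C`. -/
def BlockedAt (C : Set (Node d)) (u m w : Node d) : Prop :=
  (¬ (G.adj u m ∧ G.adj w m) ∧ m ∈ C) ∨
  ((G.adj u m ∧ G.adj w m) ∧ m ∉ C ∧ ∀ x, G.Desc m x → x ∉ C)

/-- A path `p` is blocked by `C` if some consecutive triple on it blocks it. -/
def Blocked (C : Set (Node d)) (p : List (Node d)) : Prop :=
  ∃ q u m w r, p = q ++ u :: m :: w :: r ∧ G.BlockedAt C u m w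

/-- `a` and `b` are d-separated given `C`: every path between them is blocked. -/
def DSep (a b : Node d) (C : Set (Node d)) : Prop :=
  ∀ p, G.IsPath p a b → G.Blocked C p

/-- `S ⊆ {1, …, d}` is invariant if `E` and `Y` are d-separated given `S`. -/
def Invariant (S : Set (Fin d)) : Prop := G.DSep Node.E Node.Y (Node.V '' S)

/-- `S` is minimally invariant if it is invariant and no strict subset of `S`
is invariant. -/
def MinInvariant (S : Set (Fin d)) : Prop :=
  G.Invariant S ∧ ∀ S', S' ⊂ S → ¬ G.Invariant S'

/-- `S_AS`: the union of all minimally invariant sets. -/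
def SAS : Set (Fin d) := ⋃₀ {S | G.MinInvariant S}

/-- `S_ICP`: the intersection of all invariant sets (`∅` if there are none). -/
def SICP : Set (Fin d) :=
  {j | (∃ S, G.Invariant S) ∧ ∀ S, G.Invariant S → j ∈ S}

/-- `S_AS^m`: the union of all minimally invariant sets of cardinality `≤ m`. -/
def SASm (m : ℕ) : Set (Fin d) := ⋃₀ {S | G.MinInvariant S ∧ S.ncard ≤ m}

/-- The parents of `Y` among `{1, …, d}`. -/
def paY : Set (Fin d) := {j | G.adj (Node.V j) Node.Y}

/-- The children of `E` among `{1, …, d}`. -/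
def chE : Set (Fin d) := {j | G.adj Node.E (Node.V j)}

/-- The ancestors of `Y` among `{1, …, d}`. -/
def anY : Set (Fin d) := {j | Relation.TransGen G.adj (Node.V j) Node.Y}

/-- `PA(A)`: the union of the parent sets of the elements of `A ⊆ {1, …, d}`. -/
def paOf (A : Set (Fin d)) : Set (Fin d) := {j | ∃ i ∈ A, G.adj (Node.V j) (Node.V i)}

end CGraph

/-!
For conditioning sets made of ancestors of `Y`, d-separation of `E` and `Y` is monotone in the
conditioning set. If a path from `E` to `Y` is open given `U` but not given `S ⊆ U`, its first
collider `c` that is inactive given `S` is still an ancestor of `Y` (it is active given `U`), so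
the path can be rerouted at `c` along a directed path from `c` to `Y`; no node of that directed
path lies in `S`.

Every interior node of a path from `E` that is open given `C` is an ancestor of the endpoint or of
`C`: follow the path along the direction of an edge leaving the node until the first collider.
Hence minimally invariant sets consist of ancestors of `Y`. The parents of `Y` form an invariant
set when `E` is not one of them: the node before `Y` on a path from `E` is either a parent of `Y`,
hence a blocking non-collider, or a child of `Y`, which is not an ancestor of `Y`. So a minimally
invariant set exists; `S_AS` contains it and consists of ancestors of `Y`.
-/

theorem List.exists_split_at_first {α : Type*} {p : α → Prop} :
    ∀ {l : List α}, (∃ x ∈ l, p x) →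
      ∃ l₁ z l₂, l = l₁ ++ z :: l₂ ∧ p z ∧ ∀ y ∈ l₁, ¬ p y
  | [], ⟨_, hx, _⟩ => absurd hx List.not_mem_nil
  | y :: l, ⟨x, hx, hpx⟩ => by
    by_cases hy : p y
    · exact ⟨[], y, l, rfl, hy, by simp⟩
    · have hxl : x ∈ l := (List.mem_cons.mp hx).resolve_left fun h => hy (h ▸ hpx)
      obtain ⟨l₁, z, l₂, rfl, hz, hl₁⟩ := List.exists_split_at_first ⟨x, hxl, hpx⟩
      exact ⟨y :: l₁, z, l₂, rfl, hz, by simpa [hy] using hl₁⟩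

namespace CGraph

variable {d : ℕ} {G : CGraph d} {C C' : Set (Node d)} {a b u m w : Node d}

theorem adj_asymm (h : G.adj u m) : ¬ G.adj m u :=
  fun h' => G.acyclic u (.tail (.single h) h')

theorem not_desc_E (v : Node d) : ¬ G.Desc v Node.E := by
  intro h
  cases h <;> exact G.exogenous _ ‹_›

theorem pairwise_transGen_of_isChain {l : List (Node d)} (hl : l.IsChain G.adj) :
    l.Pairwise (Relation.TransGen G.adj) :=
  (hl.imp fun _ _ => .single).pairwise

theorem nodup_of_isChain {l : List (Node d)} (hl : l.IsChain G.adj) : l.Nodup := by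
  refine (pairwise_transGen_of_isChain hl).imp ?_
  rintro x _ h rfl
  exact G.acyclic x h

variable (G) in
def ancestors (C : Set (Node d)) : Set (Node d) :=
  {v | ∃ x ∈ C, Relation.ReflTransGen G.adj v x}

theorem mem_ancestors_iff : m ∈ G.ancestors C ↔ m ∈ C ∨ ∃ x, G.Desc m x ∧ x ∈ C := by
  simp only [ancestors, Set.mem_ofPred_eq, Relation.reflTransGen_iff_eq_or_transGen, Desc]
  grind

theorem mem_ancestors_of_adj (hum : G.adj u m) (hm : m ∈ G.ancestors C) : u ∈ G.ancestors C :=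
  let ⟨x, hx, hmx⟩ := hm
  ⟨x, hx, .head hum hmx⟩

theorem mem_ancestors_of_reflTransGen (hum : Relation.ReflTransGen G.adj u m) (hm : m ∈ C) :
    u ∈ G.ancestors C :=
  ⟨m, hm, hum⟩

theorem ancestors_mono (h : C ⊆ C') : G.ancestors C ⊆ G.ancestors C' :=
  fun _ ⟨x, hx, hvx⟩ => ⟨x, h hx, hvx⟩

theorem desc_of_mem_ancestors (hC : ∀ x ∈ C, G.Desc x b) (hm : m ∈ G.ancestors C) :
    G.Desc m b :=
  let ⟨x, hx, hmx⟩ := hm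
  Relation.TransGen.trans_right hmx (hC x hx)

theorem blockedAt_iff : G.BlockedAt C u m w ↔
    (¬ (G.adj u m ∧ G.adj w m) ∧ m ∈ C) ∨
      ((G.adj u m ∧ G.adj w m) ∧ m ∉ G.ancestors C) := by
  simp only [BlockedAt, mem_ancestors_iff]
  grind

theorem mem_ancestors_of_not_blockedAt (h : ¬ G.BlockedAt C u m w) (hum : G.adj u m)
    (hwm : G.adj w m) : m ∈ G.ancestors C := by
  by_contra hm
  exact h (blockedAt_iff.mpr (Or.inr ⟨⟨hum, hwm⟩, hm⟩))

theorem not_blockedAt_of_adj_of_not_mem (hmw : G.adj m w) (hm : m ∉ C) :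
    ¬ G.BlockedAt C u m w := by
  rw [blockedAt_iff]
  rintro (⟨-, hmC⟩ | ⟨⟨-, hwm⟩, -⟩)
  exacts [hm hmC, adj_asymm hmw hwm]

theorem Blocked.append_left {l₂ : List (Node d)} (l₁ : List (Node d)) (h : G.Blocked C l₂) :
    G.Blocked C (l₁ ++ l₂) := by
  obtain ⟨q, u, m, w, r, rfl, h⟩ := h
  exact ⟨l₁ ++ q, u, m, w, r, by simp, h⟩

theorem Blocked.append_right {l₁ : List (Node d)} (l₂ : List (Node d)) (h : G.Blocked C l₁) :
    G.Blocked C (l₁ ++ l₂) := by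
  obtain ⟨q, u, m, w, r, rfl, h⟩ := h
  exact ⟨q, u, m, w, r ++ l₂, by simp, h⟩

theorem Blocked.reverse {l : List (Node d)} (h : G.Blocked C l) : G.Blocked C l.reverse := by
  obtain ⟨q, u, m, w, r, rfl, h⟩ := h
  refine ⟨r.reverse, w, m, u, q.reverse, by simp, ?_⟩
  unfold BlockedAt at h ⊢
  grind

theorem blocked_cons_iff {v : Node d} {l : List (Node d)} : G.Blocked C (v :: l) ↔
    (∃ m w r, l = m :: w :: r ∧ G.BlockedAt C v m w) ∨ G.Blocked C l := by
  constructor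
  · rintro ⟨_ | ⟨x, q⟩, u, m, w, r, hl, h⟩
    · obtain ⟨rfl, rfl⟩ := List.cons.inj hl
      exact Or.inl ⟨m, w, r, rfl, h⟩
    · obtain ⟨rfl, rfl⟩ := List.cons.inj hl
      exact Or.inr ⟨q, u, m, w, r, rfl, h⟩
  · rintro (⟨m, w, r, rfl, h⟩ | h)
    exacts [⟨[], v, m, w, r, rfl, h⟩, h.append_left [v]]

theorem exists_first_blocked {p : List (Node d)} (h : G.Blocked C p) :
    ∃ q u m w r, p = q ++ u :: m :: w :: r ∧ G.BlockedAt C u m w ∧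
      ¬ G.Blocked C (q ++ [u, m]) := by
  induction p with
  | nil => obtain ⟨q, u, m, w, r, hp, -⟩ := h; simp at hp
  | cons v p ih =>
    by_cases hfirst : ∃ m w r, p = m :: w :: r ∧ G.BlockedAt C v m w
    · obtain ⟨m, w, r, rfl, hb⟩ := hfirst
      refine ⟨[], v, m, w, r, rfl, hb, ?_⟩
      rintro ⟨q, u, m, w, r, hp, -⟩
      have := congrArg List.length hp
      simp at this
      omega
    obtain ⟨q, u, m, w, r, rfl, hb, hq⟩ := ih ((blocked_cons_iff.mp h).resolve_left hfirst)
    refine ⟨v :: q, u, m, w, r, rfl, hb, ?_⟩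
    rw [List.cons_append, blocked_cons_iff]
    rintro (⟨m', w', r', hq', hb'⟩ | hq')
    · refine hfirst ⟨m', w', r' ++ w :: r, ?_, hb'⟩
      rw [show q ++ u :: m :: w :: r = (q ++ [u, m]) ++ w :: r by simp, hq']
      rfl
    · exact hq hq'

theorem not_blocked_append_cons {l₁ l₂ : List (Node d)} {x : Node d}
    (h₁ : ¬ G.Blocked C (l₁ ++ [x])) (h₂ : ¬ G.Blocked C (x :: l₂))
    (hx : ∀ u ∈ l₁.getLast?, ∀ w ∈ l₂.head?, ¬ G.BlockedAt C u x w) :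
    ¬ G.Blocked C (l₁ ++ x :: l₂) := by
  induction l₁ with
  | nil => exact h₂
  | cons y l₁ ih =>
    rw [List.cons_append] at h₁ ⊢
    rw [blocked_cons_iff] at h₁ ⊢
    rintro (⟨m, w, r, hl, hb⟩ | hb)
    · rcases l₁ with _ | ⟨m', l₁⟩
      · obtain ⟨rfl, rfl⟩ : x = m ∧ l₂ = w :: r := by simpa using hl
        exact hx y rfl w rfl hb
      · obtain ⟨rfl, hl⟩ : m' = m ∧ l₁ ++ x :: l₂ = w :: r := by simpa using hl
        rcases l₁ with _ | ⟨w', l₁⟩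
        · obtain ⟨rfl, -⟩ : x = w ∧ l₂ = r := by simpa using hl
          exact h₁ (Or.inl ⟨m', x, [], rfl, hb⟩)
        · obtain ⟨rfl, -⟩ : w' = w ∧ l₁ ++ x :: l₂ = r := by simpa using hl
          exact h₁ (Or.inl ⟨m', w', l₁ ++ [x], rfl, hb⟩)
    · refine ih (fun h => h₁ (Or.inr h)) (fun u hu w hw => ?_) hb
      exact hx u (by cases l₁ <;> simp_all) w hw

theorem not_blocked_of_isChain {l : List (Node d)} (hl : l.IsChain G.adj)
    (hC : ∀ x ∈ l, x ∉ C) : ¬ G.Blocked C l := by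
  rintro ⟨q, u, m, w, r, rfl, h⟩
  have hmw : G.adj m w := (List.isChain_cons_cons.mp hl.right_of_append.tail).1
  exact not_blockedAt_of_adj_of_not_mem hmw (hC m (by simp)) h

theorem desc_or_mem_ancestors_of_adj_head {r : List (Node d)}
    (hc : (u :: m :: r).IsChain G.Edge) (ho : ¬ G.Blocked C (u :: m :: r))
    (hb : (u :: m :: r).getLast? = some b) (hum : G.adj u m) :
    G.Desc u b ∨ u ∈ G.ancestors C := by
  induction r generalizing u m with
  | nil =>
    obtain rfl : m = b := by simpa using hb
    exact Or.inl (.single hum)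
  | cons w r ih =>
    have hnb : ¬ G.BlockedAt C u m w :=
      fun h => ho (blocked_cons_iff.mpr (Or.inl ⟨m, w, r, rfl, h⟩))
    have hc' := (List.isChain_cons_cons.mp hc).2
    rcases (List.isChain_cons_cons.mp hc').1 with hmw | hwm
    · rcases ih hc' (fun h => ho (h.append_left [u]))
        (by simpa using hb) hmw with h | h
      exacts [Or.inl (.head hum h), Or.inr (mem_ancestors_of_adj hum h)]
    · exact Or.inr (mem_ancestors_of_adj hum (mem_ancestors_of_not_blockedAt hnb hum hwm))

theorem desc_or_mem_ancestors_of_interior {q r : List (Node d)}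
    (hc : (q ++ u :: m :: w :: r).IsChain G.Edge) (ho : ¬ G.Blocked C (q ++ u :: m :: w :: r))
    (hE : (q ++ u :: m :: w :: r).head? = some Node.E)
    (hb : (q ++ u :: m :: w :: r).getLast? = some b) :
    G.Desc m b ∨ m ∈ G.ancestors C := by
  have hnb : ¬ G.BlockedAt C u m w := fun h => ho ⟨q, u, m, w, r, rfl, h⟩
  by_cases hum : G.adj u m
  · by_cases hwm : G.adj w m
    · exact Or.inr (mem_ancestors_of_not_blockedAt hnb hum hwm)
    have hc' : (m :: w :: r).IsChain G.Edge := by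
      rw [show q ++ u :: m :: w :: r = (q ++ [u]) ++ m :: w :: r by simp] at hc
      exact hc.right_of_append
    have hmw : G.adj m w := (List.isChain_cons_cons.mp hc').1.resolve_right hwm
    refine desc_or_mem_ancestors_of_adj_head hc' (fun h => ho ?_) (by simpa using hb) hmw
    simpa using h.append_left (q ++ [u])
  · -- running backwards from `m` can only end at a collider, as `E` has no parents
    have hpre : (q ++ [u, m]).reverse = m :: u :: q.reverse := by simp
    have hc' : (m :: u :: q.reverse).IsChain G.Edge := by
      rw [← hpre, List.isChain_reverse]
      rw [show q ++ u :: m :: w :: r = (q ++ [u, m]) ++ w :: r by simp] at hc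
      exact hc.left_of_append.imp fun _ _ => Or.symm
    have hmu : G.adj m u := (List.isChain_cons_cons.mp hc').1.resolve_right hum
    refine (desc_or_mem_ancestors_of_adj_head hc' (fun h => ho ?_) ?_ hmu).imp_left
      fun h => absurd h (not_desc_E m)
    · rw [← hpre] at h
      simpa using h.reverse.append_right (w :: r)
    · rw [← hpre, List.getLast?_reverse]
      cases q <;> simpa using hE

theorem exists_unblocked_path_of_reflTransGen {P : List (Node d)} {c : Node d}
    (hP : G.IsPath P a c) (hPC : ¬ G.Blocked C P) (hcb : Relation.ReflTransGen G.adj c b)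
    (hc : c ∉ G.ancestors C) : ∃ p, G.IsPath p a b ∧ ¬ G.Blocked C p := by
  obtain ⟨hPa, hPc, hPnd, hPch⟩ := hP
  obtain ⟨l, hl, hlb⟩ := List.exists_isChain_cons_of_relationReflTransGen hcb
  have hlC : ∀ x ∈ c :: l, x ∉ C := by
    intro x hx hxC
    refine hc (mem_ancestors_of_reflTransGen ?_ hxC)
    rcases List.mem_cons.mp hx with rfl | hx
    · exact .refl
    · exact (List.rel_of_pairwise_cons (pairwise_transGen_of_isChain hl) hx).to_reflTransGen
  -- splice `P` into the directed path at the first node of `P` lying on it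
  obtain ⟨P₁, z, P₂, rfl, hz, hP₁⟩ := List.exists_split_at_first (p := (· ∈ c :: l))
    ⟨c, List.mem_of_getLast? hPc, List.mem_cons_self⟩
  obtain ⟨D₁, D₂, hD⟩ := List.append_of_mem hz
  rw [hD] at hl hlC
  have hzD₂ : (z :: D₂).IsChain G.adj := hl.right_of_append
  refine ⟨P₁ ++ z :: D₂, ⟨?_, ?_, ?_, ?_⟩, ?_⟩
  · cases P₁ <;> simpa using hPa
  · have hlb' : (c :: l).getLast? = some b := by simp [List.getLast?_eq_some_getLast, hlb]
    rw [hD] at hlb'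
    simpa using hlb'
  · refine List.nodup_append.mpr ⟨(List.nodup_append.mp hPnd).1,
      (List.nodup_append.mp (nodup_of_isChain hl)).2.1, fun x hx y hy hxy => hP₁ x hx ?_⟩
    rw [hD, hxy]
    exact List.mem_append_right _ hy
  · have hP₁z : (P₁ ++ [z]).IsChain G.Edge := by
      rw [show P₁ ++ z :: P₂ = P₁ ++ [z] ++ P₂ by simp] at hPch
      exact hPch.left_of_append
    show (P₁ ++ z :: D₂).IsChain G.Edge
    simpa using hP₁z.append_overlap (hzD₂.imp fun _ _ => Or.inl) (List.cons_ne_nil z [])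
  · refine not_blocked_append_cons (fun h => hPC (by simpa using h.append_right P₂))
      (not_blocked_of_isChain hzD₂ fun x hx => hlC x (List.mem_append_right _ hx))
      (fun _ _ w hw => not_blockedAt_of_adj_of_not_mem ?_ (hlC z (by simp)))
    cases D₂ with
    | nil => simp at hw
    | cons w' D₂ =>
      obtain rfl : w' = w := by simpa using hw
      exact (List.isChain_cons_cons.mp hzD₂).1

theorem exists_unblocked_path_of_subset {p : List (Node d)} (hCC' : C ⊆ C')
    (hC' : ∀ x ∈ C', G.Desc x b) (hp : G.IsPath p a b) (ho : ¬ G.Blocked C' p) :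
    ∃ p', G.IsPath p' a b ∧ ¬ G.Blocked C p' := by
  by_cases hb : G.Blocked C p
  swap
  · exact ⟨p, hp, hb⟩
  obtain ⟨q, u, c, w, r, rfl, hblk, hpre⟩ := exists_first_blocked hb
  have hnb : ¬ G.BlockedAt C' u c w := fun h => ho ⟨q, u, c, w, r, rfl, h⟩
  obtain ⟨hcol, hc⟩ : (G.adj u c ∧ G.adj w c) ∧ c ∉ G.ancestors C := by
    rcases blockedAt_iff.mp hblk with ⟨hncol, hcC⟩ | h
    · exact absurd (blockedAt_iff.mpr (Or.inl ⟨hncol, hCC' hcC⟩)) hnb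
    · exact h
  have hcb : G.Desc c b :=
    desc_of_mem_ancestors hC' (mem_ancestors_of_not_blockedAt hnb hcol.1 hcol.2)
  obtain ⟨ha, -, hnd, hch⟩ := hp
  rw [show q ++ u :: c :: w :: r = (q ++ [u, c]) ++ w :: r by simp] at ha hnd hch
  refine exists_unblocked_path_of_reflTransGen
    ⟨?_, by simp, hnd.sublist (List.sublist_append_left _ _), hch.left_of_append⟩
    hpre hcb.to_reflTransGen hc
  cases q <;> simpa using ha

theorem DSep.mono (h : G.DSep a b C) (hCC' : C ⊆ C') (hC' : ∀ x ∈ C', G.Desc x b) :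
    G.DSep a b C' := by
  intro p hp
  by_contra ho
  obtain ⟨p', hp', ho'⟩ := exists_unblocked_path_of_subset hCC' hC' hp ho
  exact ho' (h p' hp')

theorem Invariant.mono {S U : Set (Fin d)} (hS : G.Invariant S) (hSU : S ⊆ U)
    (hU : U ⊆ G.anY) : G.Invariant U :=
  DSep.mono hS (Set.image_mono hSU) (by rintro _ ⟨i, hi, rfl⟩; exact hU hi)

theorem invariant_paY (h : ¬ G.adj Node.E Node.Y) : G.Invariant G.paY := by
  rintro p ⟨hE, hY, -, hc⟩
  by_contra ho
  obtain ⟨l, rfl⟩ := List.getLast?_eq_some_iff.mp hY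
  rcases List.eq_nil_or_concat l with rfl | ⟨l, x, rfl⟩
  · simp at hE
  rcases List.eq_nil_or_concat l with rfl | ⟨l, v, rfl⟩
  · obtain rfl : x = Node.E := by simpa using hE
    rcases List.isChain_pair.mp hc with hEY | hYE
    exacts [h hEY, G.exogenous _ hYE]
  rw [show (l.concat v).concat x ++ [Node.Y] = l ++ v :: x :: Node.Y :: [] by simp] at hE hY hc ho
  rcases (List.isChain_cons_cons.mp (List.isChain_cons_cons.mp hc.right_of_append).2).1
    with hxY | hYx
  · cases x with
    | E => exact h hxY
    | Y => exact G.acyclic _ (.single hxY)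
    | V j => exact ho ⟨l, v, Node.V j, Node.Y, [], rfl,
        Or.inl ⟨fun hcol => adj_asymm hxY hcol.2, j, hxY, rfl⟩⟩
  · have hpaY : ∀ y ∈ Node.V '' G.paY, G.Desc y Node.Y := by
      rintro _ ⟨j, hj, rfl⟩
      exact .single hj
    have hxY := (desc_or_mem_ancestors_of_interior hc ho hE hY).elim id
      (desc_of_mem_ancestors hpaY)
    exact G.acyclic _ (.head hYx hxY)

theorem MinInvariant.subset_anY {S : Set (Fin d)} (hS : G.MinInvariant S) : S ⊆ G.anY := by
  by_contra hsub
  refine hS.2 (S ∩ G.anY) ⟨Set.inter_subset_left, fun h => hsub fun i hi => (h hi).2⟩ ?_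
  intro p hp
  by_contra ho
  obtain ⟨q, u, m, w, r, rfl, hblk⟩ := hS.1 p hp
  refine ho ⟨q, u, m, w, r, rfl, ?_⟩
  rw [blockedAt_iff] at hblk ⊢
  rcases hblk with ⟨hncol, i, hi, rfl⟩ | ⟨hcol, hm⟩
  · have hanY : ∀ x ∈ Node.V '' (S ∩ G.anY), G.Desc x Node.Y := by
      rintro _ ⟨j, hj, rfl⟩
      exact hj.2
    refine Or.inl ⟨hncol, i, ⟨hi, ?_⟩, rfl⟩
    exact (desc_or_mem_ancestors_of_interior hp.2.2.2 ho hp.1 hp.2.1).elim id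
      (desc_of_mem_ancestors hanY)
  · exact Or.inr ⟨hcol, fun h => hm (ancestors_mono (Set.image_mono Set.inter_subset_left) h)⟩

theorem exists_minInvariant_subset {S : Set (Fin d)} (hS : G.Invariant S) :
    ∃ T ⊆ S, G.MinInvariant T := by
  obtain ⟨T, hTS, hT, hTmin⟩ := exists_minimal_le_of_wellFoundedLT G.Invariant S hS
  exact ⟨T, hTS, hT, fun S' hS'T hS' => hS'T.2 (hTmin hS' hS'T.1)⟩

end CGraph

/-- if `E` is not a parent of `Y`, then `S_AS` is invariant,
i.e., `E` and `Y` are d-separated given the union of all minimally invariant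
sets. -/
theorem SAS_invariant {d : ℕ} (G : CGraph d) (h : ¬ G.adj Node.E Node.Y) :
    G.Invariant G.SAS := by
  obtain ⟨T, -, hT⟩ := CGraph.exists_minInvariant_subset (CGraph.invariant_paY h)
  exact hT.1.mono (Set.subset_sUnion_of_mem hT)
    (Set.sUnion_subset fun _ => CGraph.MinInvariant.subset_anY)
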